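/- arXiv:1907.05229 — 4 statements merged into one kernel-verified Lean document; each statement's English description precedes it below -/
import Mathlib

section
/- In a weak bialgebra H, every element of the image of Π^L commutes with every element of the image of Π^R; i.e., if l ∈ H^L := Π^L(H) and h ∈ H^R := Π^R(H), then hl = lh. -/
/-! The weak bialgebra axioms give two factorizations of `Δ²(1)`, as `(Δ(1) ⊗ 1)(1 ⊗ Δ(1))` and as
`(1 ⊗ Δ(1))(Δ(1) ⊗ 1)`. Contracting the outer legs with `x ↦ ε(x a)` and `w ↦ ε(b w)` sends the
first to `Π^L(a) Π^R(b)` and the second to `Π^R(b) Π^L(a)`, because in either product the middle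
leg is the product of the second leg of one copy of `Δ(1)` with the first leg of the other. -/

open TensorProduct

namespace WeakHopfPaper

variable (k H : Type*) [Field k] [Ring H] [Algebra k H] [Coalgebra k H]

/-- `Π^L h = ε(1⁽¹⁾ h) • 1⁽²⁾`, built as `(ε ⊗ id)(Δ(1) · (h ⊗ 1))`. -/
noncomputable def PiL : H →ₗ[k] H :=
  (TensorProduct.lid k H).toLinearMap
    ∘ₗ TensorProduct.map (Coalgebra.counit (R := k)) LinearMap.id
    ∘ₗ LinearMap.mulLeft k (Coalgebra.comul (R := k) (1 : H))
    ∘ₗ (TensorProduct.mk k H H).flip 1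

/-- `Π^R h = 1⁽¹⁾ • ε(h 1⁽²⁾)`, built as `(id ⊗ ε)((1 ⊗ h) · Δ(1))`. -/
noncomputable def PiR : H →ₗ[k] H :=
  (TensorProduct.rid k H).toLinearMap
    ∘ₗ TensorProduct.map LinearMap.id (Coalgebra.counit (R := k))
    ∘ₗ LinearMap.mulRight k (Coalgebra.comul (R := k) (1 : H))
    ∘ₗ TensorProduct.mk k H H 1

/-- `Π̄^L h = 1⁽¹⁾ • ε(1⁽²⁾ h)`, built as `(id ⊗ ε)(Δ(1) · (1 ⊗ h))`. -/
noncomputable def PiLbar : H →ₗ[k] H :=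
  (TensorProduct.rid k H).toLinearMap
    ∘ₗ TensorProduct.map LinearMap.id (Coalgebra.counit (R := k))
    ∘ₗ LinearMap.mulLeft k (Coalgebra.comul (R := k) (1 : H))
    ∘ₗ TensorProduct.mk k H H 1

/-- `Π̄^R h = ε(h 1⁽¹⁾) • 1⁽²⁾`, built as `(ε ⊗ id)((h ⊗ 1) · Δ(1))`. -/
noncomputable def PiRbar : H →ₗ[k] H :=
  (TensorProduct.lid k H).toLinearMap
    ∘ₗ TensorProduct.map (Coalgebra.counit (R := k)) LinearMap.id
    ∘ₗ LinearMap.mulRight k (Coalgebra.comul (R := k) (1 : H))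
    ∘ₗ (TensorProduct.mk k H H).flip 1

/-- A weak bialgebra: an algebra and coalgebra such that `Δ` is multiplicative,
`Δ²(1) = (Δ(1)⊗1)(1⊗Δ(1)) = (1⊗Δ(1))(Δ(1)⊗1)` and
`ε(hlm) = ε(h l⁽¹⁾)ε(l⁽²⁾ m) = ε(h l⁽²⁾)ε(l⁽¹⁾ m)`. -/
class WeakBialgebra : Prop where
  comul_mul : ∀ x y : H,
    Coalgebra.comul (R := k) (x * y) =
      Coalgebra.comul (R := k) x * Coalgebra.comul (R := k) y
  comul_one_left :
    (TensorProduct.map (Coalgebra.comul (R := k)) LinearMap.id)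
        (Coalgebra.comul (R := k) (1 : H)) =
      (Coalgebra.comul (R := k) (1 : H) ⊗ₜ[k] (1 : H)) *
        ((TensorProduct.assoc k H H H).symm
          ((1 : H) ⊗ₜ[k] Coalgebra.comul (R := k) (1 : H)))
  comul_one_right :
    (TensorProduct.map (Coalgebra.comul (R := k)) LinearMap.id)
        (Coalgebra.comul (R := k) (1 : H)) =
      ((TensorProduct.assoc k H H H).symm
          ((1 : H) ⊗ₜ[k] Coalgebra.comul (R := k) (1 : H))) *
        (Coalgebra.comul (R := k) (1 : H) ⊗ₜ[k] (1 : H))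
  counit_left : ∀ h l m : H,
    Coalgebra.counit (R := k) (h * l * m) =
      LinearMap.mul' k k
        ((TensorProduct.map
          (Coalgebra.counit (R := k) ∘ₗ LinearMap.mulLeft k h)
          (Coalgebra.counit (R := k) ∘ₗ LinearMap.mulRight k m))
          (Coalgebra.comul (R := k) l))
  counit_right : ∀ h l m : H,
    Coalgebra.counit (R := k) (h * l * m) =
      LinearMap.mul' k k
        ((TensorProduct.map
          (Coalgebra.counit (R := k) ∘ₗ LinearMap.mulLeft k h)
          (Coalgebra.counit (R := k) ∘ₗ LinearMap.mulRight k m))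
          ((TensorProduct.comm k H H) (Coalgebra.comul (R := k) l)))


section Contraction

variable {R A : Type*} [CommSemiring R] [Semiring A] [Algebra R A]

noncomputable def contractLeft (φ : A →ₗ[R] R) : A ⊗[R] A →ₗ[R] A :=
  (TensorProduct.lid R A).toLinearMap ∘ₗ φ.rTensor A

noncomputable def contractRight (ψ : A →ₗ[R] R) : A ⊗[R] A →ₗ[R] A :=
  (TensorProduct.rid R A).toLinearMap ∘ₗ ψ.lTensor A

noncomputable def contractOuter (φ ψ : A →ₗ[R] R) : (A ⊗[R] A) ⊗[R] A →ₗ[R] A :=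
  contractRight ψ ∘ₗ (contractLeft φ).rTensor A

@[simp]
theorem contractLeft_tmul (φ : A →ₗ[R] R) (x y : A) : contractLeft φ (x ⊗ₜ y) = φ x • y := by
  simp [contractLeft]

@[simp]
theorem contractRight_tmul (ψ : A →ₗ[R] R) (z w : A) : contractRight ψ (z ⊗ₜ w) = ψ w • z := by
  simp [contractRight]

@[simp]
theorem contractOuter_tmul (φ ψ : A →ₗ[R] R) (x y w : A) :
    contractOuter φ ψ ((x ⊗ₜ y) ⊗ₜ w) = ψ w • φ x • y := by
  simp [contractOuter]

theorem contractLeft_mul_tmul_one (φ : A →ₗ[R] R) (a : A) (u : A ⊗[R] A) :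
    contractLeft φ (u * (a ⊗ₜ 1)) = contractLeft (φ ∘ₗ LinearMap.mulRight R a) u := by
  induction u using TensorProduct.induction_on with
  | zero => simp
  | tmul x y => simp [Algebra.TensorProduct.tmul_mul_tmul]
  | add u₁ u₂ h₁ h₂ => simp [add_mul, h₁, h₂]

theorem contractRight_one_tmul_mul (ψ : A →ₗ[R] R) (b : A) (v : A ⊗[R] A) :
    contractRight ψ ((1 ⊗ₜ b) * v) = contractRight (ψ ∘ₗ LinearMap.mulLeft R b) v := by
  induction v using TensorProduct.induction_on with
  | zero => simp
  | tmul z w => simp [Algebra.TensorProduct.tmul_mul_tmul]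
  | add v₁ v₂ h₁ h₂ => simp [mul_add, h₁, h₂]

theorem contractOuter_tmul_one_mul_one_tmul (φ ψ : A →ₗ[R] R) (u v : A ⊗[R] A) :
    contractOuter φ ψ ((u ⊗ₜ 1) * (TensorProduct.assoc R A A A).symm (1 ⊗ₜ v)) =
      contractLeft φ u * contractRight ψ v := by
  induction u using TensorProduct.induction_on with
  | zero => simp
  | add u₁ u₂ h₁ h₂ => simp [add_tmul, add_mul, h₁, h₂]
  | tmul x y =>
    induction v using TensorProduct.induction_on with
    | zero => simp
    | add v₁ v₂ h₁ h₂ => simp [tmul_add, mul_add, h₁, h₂]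
    | tmul z w => simp [Algebra.TensorProduct.tmul_mul_tmul, smul_comm (ψ w)]

theorem contractOuter_one_tmul_mul_tmul_one (φ ψ : A →ₗ[R] R) (u v : A ⊗[R] A) :
    contractOuter φ ψ ((TensorProduct.assoc R A A A).symm (1 ⊗ₜ v) * (u ⊗ₜ 1)) =
      contractRight ψ v * contractLeft φ u := by
  induction u using TensorProduct.induction_on with
  | zero => simp
  | add u₁ u₂ h₁ h₂ => simp [add_tmul, mul_add, h₁, h₂]
  | tmul x y =>
    induction v using TensorProduct.induction_on with
    | zero => simp
    | add v₁ v₂ h₁ h₂ => simp [tmul_add, add_mul, h₁, h₂]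
    | tmul z w => simp [Algebra.TensorProduct.tmul_mul_tmul, smul_comm (ψ w)]

end Contraction

variable {k H}

theorem PiL_apply (a : H) :
    PiL k H a =
      contractLeft (Coalgebra.counit ∘ₗ LinearMap.mulRight k a) (Coalgebra.comul (R := k) 1) :=
  contractLeft_mul_tmul_one _ a _

theorem PiR_apply (b : H) :
    PiR k H b =
      contractRight (Coalgebra.counit ∘ₗ LinearMap.mulLeft k b) (Coalgebra.comul (R := k) 1) :=
  contractRight_one_tmul_mul _ b _

/-- elements of `H^L = Im Π^L` commute with elements of `H^R = Im Π^R`. -/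
theorem HL_commutes_HR [WeakBialgebra k H] :
    ∀ l ∈ LinearMap.range (PiL k H), ∀ h ∈ LinearMap.range (PiR k H),
      h * l = l * h := by
  rintro l ⟨a, rfl⟩ h ⟨b, rfl⟩
  have hΔ₂ := congrArg
    (contractOuter (Coalgebra.counit ∘ₗ LinearMap.mulRight k a)
      (Coalgebra.counit ∘ₗ LinearMap.mulLeft k b))
    ((WeakBialgebra.comul_one_left (k := k) (H := H)).symm.trans WeakBialgebra.comul_one_right)
  rwa [contractOuter_tmul_one_mul_one_tmul, contractOuter_one_tmul_mul_tmul_one, ← PiL_apply,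
    ← PiR_apply, eq_comm] at hΔ₂

end WeakHopfPaper
end

section
/- In a weak bialgebra H, for every h ∈ H and l ∈ H^R one has l^{(1)} h^{(1)} ⊗ l^{(2)} h^{(2)} = h^{(1)} ⊗ l h^{(2)} and h^{(1)} l^{(1)} ⊗ h^{(2)} l^{(2)} = h^{(1)} ⊗ h^{(2)} l. -/
/-!
Write `l = Π^R(g) = 1⁽¹⁾ ε(g 1⁽²⁾)`. Applying `Δ` and expanding `Δ²(1)` by the axiom
`Δ²(1) = (Δ(1) ⊗ 1)(1 ⊗ Δ(1))` gives `Δ(l) = Δ(1)(1 ⊗ l)`; the other ordering of the axiom gives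
`Δ(l) = (1 ⊗ l)Δ(1)`. Since `Δ` is multiplicative, `Δ(1)Δ(h) = Δ(h) = Δ(h)Δ(1)`, so
`Δ(l)Δ(h) = (1 ⊗ l)Δ(h)` and `Δ(h)Δ(l) = Δ(h)(1 ⊗ l)`.
-/

open TensorProduct

namespace WeakHopfPaper

variable (k H : Type*) [Field k] [Ring H] [Algebra k H] [Coalgebra k H]

section Contraction

variable {R M N P : Type*} [CommSemiring R] [AddCommMonoid M] [Module R M]
  [AddCommMonoid N] [Module R N] [AddCommMonoid P] [Module R P]

theorem apply_rid_lTensor (f : M →ₗ[R] N) (φ : P →ₗ[R] R) (t : M ⊗[R] P) :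
    f (TensorProduct.rid R M (LinearMap.lTensor M φ t)) =
      TensorProduct.rid R N (LinearMap.lTensor N φ (LinearMap.rTensor P f t)) := by
  induction t using TensorProduct.induction_on with
  | zero => simp only [map_zero]
  | tmul m p => simp
  | add x y hx hy => simp only [map_add, hx, hy]

theorem rid_lTensor_assoc_symm_tmul (φ : P →ₗ[R] R) (m : M) (v : N ⊗[R] P) :
    TensorProduct.rid R (M ⊗[R] N)
        (LinearMap.lTensor (M ⊗[R] N) φ ((TensorProduct.assoc R M N P).symm (m ⊗ₜ v))) =
      m ⊗ₜ TensorProduct.rid R N (LinearMap.lTensor N φ v) := by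
  induction v using TensorProduct.induction_on with
  | zero => simp only [tmul_zero, map_zero]
  | tmul n p => simp [tmul_smul]
  | add x y hx hy => simp only [tmul_add, map_add, hx, hy]

end Contraction

section AlgebraContraction

variable {R A C : Type*} [CommSemiring R] [Semiring A] [Algebra R A] [Semiring C] [Algebra R C]

theorem one_tmul_mul_eq_lTensor (c : C) (t : A ⊗[R] C) :
    ((1 : A) ⊗ₜ c) * t = LinearMap.lTensor A (LinearMap.mulLeft R c) t := by
  rw [← LinearMap.mulLeft_apply (R := R), LinearMap.mulLeft_tmul, LinearMap.mulLeft_one]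
  rfl

theorem mul_one_tmul_eq_lTensor (c : C) (t : A ⊗[R] C) :
    t * ((1 : A) ⊗ₜ c) = LinearMap.lTensor A (LinearMap.mulRight R c) t := by
  rw [← LinearMap.mulRight_apply (R := R), LinearMap.mulRight_tmul, LinearMap.mulRight_one]
  rfl

theorem rid_lTensor_tmul_one_mul (φ : C →ₗ[R] R) (a : A) (t : A ⊗[R] C) :
    TensorProduct.rid R A (LinearMap.lTensor A φ ((a ⊗ₜ (1 : C)) * t)) =
      a * TensorProduct.rid R A (LinearMap.lTensor A φ t) := by
  induction t using TensorProduct.induction_on with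
  | zero => simp only [mul_zero, map_zero]
  | tmul b c => simp [Algebra.TensorProduct.tmul_mul_tmul]
  | add x y hx hy => simp only [mul_add, map_add, hx, hy]

theorem rid_lTensor_mul_tmul_one (φ : C →ₗ[R] R) (a : A) (t : A ⊗[R] C) :
    TensorProduct.rid R A (LinearMap.lTensor A φ (t * (a ⊗ₜ (1 : C)))) =
      TensorProduct.rid R A (LinearMap.lTensor A φ t) * a := by
  induction t using TensorProduct.induction_on with
  | zero => simp only [zero_mul, map_zero]
  | tmul b c => simp [Algebra.TensorProduct.tmul_mul_tmul]
  | add x y hx hy => simp only [add_mul, map_add, hx, hy]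

end AlgebraContraction

section PiR

variable {k H}

local notation "ε" => Coalgebra.counit (R := k) (A := H)
local notation "Δ" => Coalgebra.comul (R := k) (A := H)

theorem PiR_apply_s6 (g : H) :
    PiR k H g = TensorProduct.rid k H (LinearMap.lTensor H (ε ∘ₗ LinearMap.mulLeft k g) (Δ 1)) := by
  rw [LinearMap.lTensor_comp_apply, ← one_tmul_mul_eq_lTensor]
  rfl

theorem comul_PiR (g : H) :
    Δ (PiR k H g) = TensorProduct.rid k (H ⊗[k] H)
      (LinearMap.lTensor _ (ε ∘ₗ LinearMap.mulLeft k g) (LinearMap.rTensor H Δ (Δ 1))) := by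
  rw [PiR_apply_s6, apply_rid_lTensor]

variable [WeakBialgebra k H]

theorem comul_PiR_eq_comul_one_mul (g : H) :
    Δ (PiR k H g) = Δ 1 * ((1 : H) ⊗ₜ PiR k H g) := by
  rw [comul_PiR, LinearMap.rTensor, WeakBialgebra.comul_one_left, rid_lTensor_tmul_one_mul,
    rid_lTensor_assoc_symm_tmul, PiR_apply_s6]

theorem comul_PiR_eq_mul_comul_one (g : H) :
    Δ (PiR k H g) = ((1 : H) ⊗ₜ PiR k H g) * Δ 1 := by
  rw [comul_PiR, LinearMap.rTensor, WeakBialgebra.comul_one_right, rid_lTensor_mul_tmul_one,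
    rid_lTensor_assoc_symm_tmul, PiR_apply_s6]

end PiR

/-- for `l ∈ H^R`:
`l⁽¹⁾h⁽¹⁾ ⊗ l⁽²⁾h⁽²⁾ = h⁽¹⁾ ⊗ l h⁽²⁾` and `h⁽¹⁾l⁽¹⁾ ⊗ h⁽²⁾l⁽²⁾ = h⁽¹⁾ ⊗ h⁽²⁾ l`. -/
theorem comul_mul_HR [WeakBialgebra k H] :
    ∀ (h : H), ∀ l ∈ LinearMap.range (PiR k H),
      (Coalgebra.comul (R := k) l * Coalgebra.comul (R := k) h =
        (TensorProduct.map LinearMap.id (LinearMap.mulLeft k l))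
          (Coalgebra.comul (R := k) h)) ∧
      (Coalgebra.comul (R := k) h * Coalgebra.comul (R := k) l =
        (TensorProduct.map LinearMap.id (LinearMap.mulRight k l))
          (Coalgebra.comul (R := k) h)) := by
  rintro h l ⟨g, rfl⟩
  constructor
  · rw [comul_PiR_eq_mul_comul_one, mul_assoc, ← WeakBialgebra.comul_mul, one_mul]
    exact one_tmul_mul_eq_lTensor _ _
  · rw [comul_PiR_eq_comul_one_mul, ← mul_assoc, ← WeakBialgebra.comul_mul, mul_one]
    exact mul_one_tmul_eq_lTensor _ _

end WeakHopfPaper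
end

section
/- In a weak bialgebra H, for all h, m ∈ H and l ∈ H^L, the equality Π^L(h^{(1)} l) · Π^L(h^{(2)} m) = Π^L(h l m) holds. -/
/-!
Write `θ_h(y) = ε(h⁽¹⁾ y) h⁽²⁾` (`PiLWith k h`), so that `Π^L = θ_1`. Multiplicativity of `Δ`
gives `Π^L(h⁽¹⁾ y) h⁽²⁾ = θ_h(y)`, and the axiom `Δ²(1) = (1 ⊗ Δ(1))(Δ(1) ⊗ 1)` gives
`1⁽¹⁾ ⊗ θ_h(1⁽²⁾) = 1⁽¹⁾ ⊗ h 1⁽²⁾`, hence `θ_h(Π^L y) = h Π^L(y)`. The counit axiom shows that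
`Π^L(y)` and `y` define the same functional `ε(· y)`, so in fact `θ_h(y) = h Π^L(y)` for all `y`.
The same coproduct axiom gives `Δ(Π^L x) = Δ(1)(Π^L x ⊗ 1)`, hence
`Π^L(Π^L(x) y) = θ_{Π^L x}(y) = Π^L(x) Π^L(y)`, and `Π^L` is idempotent because `Π^L(1) = 1`.
Therefore `Π^L(h⁽¹⁾ l) Π^L(h⁽²⁾ m) = Π^L(Π^L(h⁽¹⁾ l) h⁽²⁾ m) = Π^L(h Π^L(l) m) = Π^L(h l m)`.
-/

open TensorProduct

namespace WeakHopfPaper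

variable (k H : Type*) [Field k] [Ring H] [Algebra k H] [Coalgebra k H]

section Slice

variable {R A M N : Type*} [CommSemiring R] [AddCommMonoid A] [Module R A]
  [AddCommMonoid M] [Module R M] [AddCommMonoid N] [Module R N]

noncomputable def sliceLeft (φ : A →ₗ[R] R) : A ⊗[R] M →ₗ[R] M :=
  TensorProduct.lid R M ∘ₗ φ.rTensor M

@[simp]
lemma sliceLeft_tmul (φ : A →ₗ[R] R) (a : A) (m : M) :
    sliceLeft φ (a ⊗ₜ[R] m) = φ a • m := rfl

lemma apply_sliceLeft (φ : A →ₗ[R] R) (f : M →ₗ[R] N) (u : A ⊗[R] M) :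
    f (sliceLeft φ u) = sliceLeft φ (f.lTensor A u) := by
  induction u using TensorProduct.induction_on with
  | zero => simp
  | tmul a m => simp
  | add u v hu hv => simp only [map_add, hu, hv]

lemma sliceLeft_lTensor (φ : A →ₗ[R] R) (f : M →ₗ[R] R) (u : A ⊗[R] M) :
    sliceLeft φ (f.lTensor A u) = LinearMap.mul' R R (TensorProduct.map φ f u) := by
  induction u using TensorProduct.induction_on with
  | zero => simp
  | tmul a m => simp
  | add u v hu hv => simp only [map_add, hu, hv]

end Slice

section AlgebraSlice

variable {R A B C : Type*} [CommSemiring R] [Semiring A] [Algebra R A] [Semiring B] [Algebra R B]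
  [Semiring C] [Algebra R C]

lemma tensorAssoc_mul (u v : (A ⊗[R] B) ⊗[R] C) :
    TensorProduct.assoc R A B C (u * v) =
      TensorProduct.assoc R A B C u * TensorProduct.assoc R A B C v :=
  map_mul (Algebra.TensorProduct.assoc R R R A B C) u v

lemma sliceLeft_mul_tmul_one (φ : A →ₗ[R] R) (a : A) (u : A ⊗[R] B) :
    sliceLeft φ (u * (a ⊗ₜ[R] (1 : B))) = sliceLeft (φ ∘ₗ LinearMap.mulRight R a) u := by
  induction u using TensorProduct.induction_on with
  | zero => simp
  | tmul x y => simp [Algebra.TensorProduct.tmul_mul_tmul]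
  | add u v hu hv => simp only [add_mul, map_add, hu, hv]

lemma sliceLeft_one_tmul_mul (φ : A →ₗ[R] R) (b : B) (u : A ⊗[R] B) :
    sliceLeft φ (((1 : A) ⊗ₜ[R] b) * u) = b * sliceLeft φ u := by
  induction u using TensorProduct.induction_on with
  | zero => simp
  | tmul x y => simp [Algebra.TensorProduct.tmul_mul_tmul]
  | add u v hu hv => simp only [mul_add, map_add, hu, hv]

lemma sliceLeft_mul_one_tmul (φ : A →ₗ[R] R) (b : B) (u : A ⊗[R] B) :
    sliceLeft φ (u * ((1 : A) ⊗ₜ[R] b)) = sliceLeft φ u * b := by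
  induction u using TensorProduct.induction_on with
  | zero => simp
  | tmul x y => simp [Algebra.TensorProduct.tmul_mul_tmul]
  | add u v hu hv => simp only [add_mul, map_add, hu, hv]

lemma sliceLeft_one_tmul_mul_assoc (φ : A →ₗ[R] R) (v : B ⊗[R] C) (u : A ⊗[R] B) :
    sliceLeft φ (((1 : A) ⊗ₜ[R] v) * TensorProduct.assoc R A B C (u ⊗ₜ[R] (1 : C))) =
      v * (sliceLeft φ u ⊗ₜ[R] (1 : C)) := by
  induction u using TensorProduct.induction_on with
  | zero => simp
  | tmul x y => simp [Algebra.TensorProduct.tmul_mul_tmul, ← TensorProduct.smul_tmul']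
  | add u₁ u₂ h₁ h₂ => simp only [add_tmul, map_add, mul_add, h₁, h₂]

end AlgebraSlice

section Projection

variable {k H}

local notation "ε" => Coalgebra.counit (R := k) (A := H)
local notation "Δ" => Coalgebra.comul (R := k) (A := H)

variable (k) in
noncomputable def PiLWith (h : H) : H →ₗ[k] H :=
  sliceLeft ε ∘ₗ LinearMap.mulLeft k (Δ h) ∘ₗ (TensorProduct.mk k H H).flip 1

lemma PiLWith_apply (h w : H) : PiLWith k h w = sliceLeft ε (Δ h * (w ⊗ₜ[k] 1)) := rfl

lemma PiLWith_eq_sliceLeft_comul (h w : H) :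
    PiLWith k h w = sliceLeft (ε ∘ₗ LinearMap.mulRight k w) (Δ h) :=
  sliceLeft_mul_tmul_one _ _ _

lemma PiL_eq_PiLWith_one : PiL k H = PiLWith k 1 := rfl

lemma PiL_eq_sliceLeft_comul_one (x : H) :
    PiL k H x = sliceLeft (ε ∘ₗ LinearMap.mulRight k x) (Δ 1) :=
  PiLWith_eq_sliceLeft_comul 1 x

lemma sliceLeft_counit_comul (a : H) : sliceLeft ε (Δ a) = a := by
  simp [sliceLeft]

lemma PiL_one : PiL k H 1 = 1 := by
  rw [PiL_eq_PiLWith_one, PiLWith_apply, ← Algebra.TensorProduct.one_def, mul_one,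
    sliceLeft_counit_comul]

lemma lTensor_sliceLeft_counit_lTensor_comul (v : H ⊗[k] H) :
    LinearMap.lTensor H (sliceLeft ε) (LinearMap.lTensor H Δ v) = v := by
  rw [← LinearMap.lTensor_comp_apply,
    show sliceLeft ε ∘ₗ (Δ) = LinearMap.id from LinearMap.ext sliceLeft_counit_comul,
    LinearMap.lTensor_id, LinearMap.id_apply]

lemma lTensor_PiLWith (h : H) (u : H ⊗[k] H) :
    LinearMap.lTensor H (PiLWith k h) u = LinearMap.lTensor H (sliceLeft ε)
      (((1 : H) ⊗ₜ[k] Δ h) * TensorProduct.assoc k H H H (u ⊗ₜ[k] (1 : H))) := by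
  induction u using TensorProduct.induction_on with
  | zero => simp
  | tmul a b => simp [Algebra.TensorProduct.tmul_mul_tmul, PiLWith_apply]
  | add u v hu hv => simp only [add_tmul, map_add, mul_add, hu, hv]

lemma mul'_rTensor_PiL (w : H ⊗[k] H) :
    LinearMap.mul' k H (LinearMap.rTensor H (PiL k H) w) = sliceLeft ε (Δ 1 * w) := by
  induction w using TensorProduct.induction_on with
  | zero => simp
  | tmul a b =>
    rw [LinearMap.rTensor_tmul, LinearMap.mul'_apply, PiL_eq_PiLWith_one, PiLWith_apply,
      ← sliceLeft_mul_one_tmul, mul_assoc, Algebra.TensorProduct.tmul_mul_tmul, one_mul,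
      mul_one]
  | add u v hu hv => simp only [mul_add, map_add, hu, hv]

variable [WeakBialgebra k H]

lemma comul_one_mul_comul (h : H) : Δ 1 * Δ h = Δ h := by
  rw [← WeakBialgebra.comul_mul, one_mul]

lemma comul_mul_comul_one (h : H) : Δ h * Δ 1 = Δ h := by
  rw [← WeakBialgebra.comul_mul, mul_one]

lemma lTensor_comul_mul (u v : H ⊗[k] H) :
    LinearMap.lTensor H Δ (u * v) = LinearMap.lTensor H Δ u * LinearMap.lTensor H Δ v := by
  induction u using TensorProduct.induction_on with
  | zero => simp
  | tmul a b =>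
    induction v using TensorProduct.induction_on with
    | zero => simp
    | tmul c d => simp [Algebra.TensorProduct.tmul_mul_tmul, WeakBialgebra.comul_mul]
    | add v w hv hw => simp only [mul_add, map_add, hv, hw]
  | add u w hu hw => simp only [add_mul, map_add, hu, hw]

lemma lTensor_comul_comul_one :
    LinearMap.lTensor H Δ (Δ 1) =
      ((1 : H) ⊗ₜ[k] Δ 1) * TensorProduct.assoc k H H H (Δ 1 ⊗ₜ[k] (1 : H)) := by
  rw [← Coalgebra.coassoc_apply, LinearMap.rTensor, WeakBialgebra.comul_one_right,
    tensorAssoc_mul]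
  simp

lemma lTensor_PiLWith_comul_one (h : H) :
    LinearMap.lTensor H (PiLWith k h) (Δ 1) = ((1 : H) ⊗ₜ[k] h) * Δ 1 := by
  have hcomul : ((1 : H) ⊗ₜ[k] Δ h) * TensorProduct.assoc k H H H (Δ 1 ⊗ₜ[k] (1 : H)) =
      LinearMap.lTensor H Δ (((1 : H) ⊗ₜ[k] h) * Δ 1) := by
    rw [lTensor_comul_mul, lTensor_comul_comul_one, LinearMap.lTensor_tmul, ← mul_assoc,
      Algebra.TensorProduct.tmul_mul_tmul, one_mul, comul_mul_comul_one]
  rw [lTensor_PiLWith, hcomul, lTensor_sliceLeft_counit_lTensor_comul]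

lemma PiLWith_PiL (h x : H) : PiLWith k h (PiL k H x) = h * PiL k H x := by
  rw [PiL_eq_sliceLeft_comul_one, apply_sliceLeft, lTensor_PiLWith_comul_one,
    sliceLeft_one_tmul_mul]

lemma counit_mul_PiL (a y : H) : ε (a * PiL k H y) = ε (a * y) := by
  have hy := WeakBialgebra.counit_right (k := k) a 1 y
  rw [mul_one] at hy
  have ha := apply_sliceLeft (ε ∘ₗ LinearMap.mulRight k y) (ε ∘ₗ LinearMap.mulLeft k a) (Δ 1)
  rw [LinearMap.comp_apply, LinearMap.mulLeft_apply] at ha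
  rw [PiL_eq_sliceLeft_comul_one, ha, sliceLeft_lTensor, hy, TensorProduct.map_comm,
    LinearMap.mul'_comm]

lemma PiLWith_eq_mul_PiL (h y : H) : PiLWith k h y = h * PiL k H y := by
  have hy : ε ∘ₗ LinearMap.mulRight k (PiL k H y) = ε ∘ₗ LinearMap.mulRight k y :=
    LinearMap.ext fun a => counit_mul_PiL a y
  rw [← PiLWith_PiL, PiLWith_eq_sliceLeft_comul, PiLWith_eq_sliceLeft_comul, hy]

lemma comul_PiL (x : H) : Δ (PiL k H x) = Δ 1 * (PiL k H x ⊗ₜ[k] 1) := by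
  rw [PiL_eq_sliceLeft_comul_one, apply_sliceLeft, lTensor_comul_comul_one,
    sliceLeft_one_tmul_mul_assoc]

lemma PiL_mul_PiL (x y : H) : PiL k H x * PiL k H y = PiL k H (PiL k H x * y) := by
  have hPiL : PiL k H (PiL k H x * y) = PiLWith k (PiL k H x) y := by
    rw [PiLWith_apply, comul_PiL, mul_assoc, Algebra.TensorProduct.tmul_mul_tmul, mul_one]
    rfl
  rw [hPiL, PiLWith_eq_mul_PiL]

lemma PiL_PiL (x : H) : PiL k H (PiL k H x) = PiL k H x := by
  simpa [PiL_one] using (PiL_mul_PiL x 1).symm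

lemma mul'_map_PiL_PiL (u : H ⊗[k] H) :
    LinearMap.mul' k H (TensorProduct.map (PiL k H) (PiL k H) u) =
      PiL k H (LinearMap.mul' k H (LinearMap.rTensor H (PiL k H) u)) := by
  induction u using TensorProduct.induction_on with
  | zero => simp
  | tmul a b => simp [PiL_mul_PiL]
  | add u v hu hv => simp only [map_add, hu, hv]

lemma mul'_rTensor_PiL_comul_mul (h l m : H) :
    LinearMap.mul' k H (LinearMap.rTensor H (PiL k H) (Δ h * (l ⊗ₜ[k] m))) = PiLWith k h l * m := by
  rw [mul'_rTensor_PiL, ← mul_assoc, comul_one_mul_comul, PiLWith_apply,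
    ← sliceLeft_mul_one_tmul, mul_assoc, Algebra.TensorProduct.tmul_mul_tmul, mul_one, one_mul]

end Projection

/-- `Π^L(h⁽¹⁾ l) Π^L(h⁽²⁾ m) = Π^L(hlm)` for `l ∈ H^L`. -/
theorem PiL_mul_formula [WeakBialgebra k H] :
    ∀ (h m : H), ∀ l ∈ LinearMap.range (PiL k H),
      LinearMap.mul' k H
        ((TensorProduct.map
          ((PiL k H) ∘ₗ LinearMap.mulRight k l)
          ((PiL k H) ∘ₗ LinearMap.mulRight k m))
          (Coalgebra.comul (R := k) h)) = PiL k H (h * l * m) := by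
  rintro h m l ⟨x, rfl⟩
  rw [TensorProduct.map_comp, LinearMap.comp_apply, ← LinearMap.mulRight_tmul,
    LinearMap.mulRight_apply, mul'_map_PiL_PiL, mul'_rTensor_PiL_comul_mul, PiLWith_eq_mul_PiL,
    PiL_PiL]

end WeakHopfPaper
end

section
/- The algebra H^L of a weak Hopf algebra H is a left H-module algebra via the action h·l := Π^L(hl); in particular 1·l = l, h·(l l') agrees with (h^{(1)}·l)(h^{(2)}·l'), and h·(g·l) = (hg)·l for h,g ∈ H and l, l' ∈ H^L. -/
open TensorProduct

namespace WeakHopfPaper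

variable (k H : Type*) [Field k] [Ring H] [Algebra k H] [Coalgebra k H]

/-- `S` is an antipode for the weak bialgebra `H`:
`h⁽¹⁾S(h⁽²⁾) = Π^L(h)`, `S(h⁽¹⁾)h⁽²⁾ = Π^R(h)` and `S(h⁽¹⁾)h⁽²⁾S(h⁽³⁾) = S(h)`. -/
def IsWeakAntipode (S : H →ₗ[k] H) : Prop :=
  (∀ h : H, LinearMap.mul' k H
      ((TensorProduct.map LinearMap.id S) (Coalgebra.comul (R := k) h)) = PiL k H h) ∧
  (∀ h : H, LinearMap.mul' k H
      ((TensorProduct.map S LinearMap.id) (Coalgebra.comul (R := k) h)) = PiR k H h) ∧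
  (∀ h : H, LinearMap.mul' k H
      ((TensorProduct.map (LinearMap.mul' k H ∘ₗ TensorProduct.map S LinearMap.id) S)
        ((TensorProduct.map (Coalgebra.comul (R := k)) LinearMap.id)
          (Coalgebra.comul (R := k) h))) = S h)

open Coalgebra WithConv LinearMap

/-! Unitality and associativity of `h · l = Π^L(h l)` both come from `Π^L(h Π^L(x)) = Π^L(h x)`,
which holds because `ε(g Π^L(x)) = ε(g x)`.

For multiplicativity, `Δ(h l) = h⁽¹⁾ l ⊗ h⁽²⁾` for `l ∈ H^L` turns the action into a convolution,
`Π^L(h l) = h⁽¹⁾ l S(h⁽²⁾)`, and then, as `H^L` commutes with `Π^R(H)` and `Π^R ⋆ S = S`,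
```
(h⁽¹⁾ · l)(h⁽²⁾ · l') = h⁽¹⁾ l Π^R(h⁽²⁾) l' S(h⁽³⁾) = h⁽¹⁾ l l' Π^R(h⁽²⁾) S(h⁽³⁾)
                      = h⁽¹⁾ l l' S(h⁽²⁾) = h · (l l').
```
-/

section Convolution

variable {R C A : Type*} [CommSemiring R] [AddCommMonoid C] [Module R C] [CoalgebraStruct R C]
  [Semiring A] [Algebra R A]

theorem convMul_mulRight_comp (f g : C →ₗ[R] A) (c : A) :
    toConv f * toConv (mulRight R c ∘ₗ g) =
      toConv (mulRight R c ∘ₗ (toConv f * toConv g).ofConv) := by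
  ext x
  simp [(ℛ R x).convMul_apply, mul_assoc]

theorem mulLeft_comp_convMul (f g : C →ₗ[R] A) (c : A) :
    toConv (mulLeft R c ∘ₗ f) * toConv g =
      toConv (mulLeft R c ∘ₗ (toConv f * toConv g).ofConv) := by
  ext x
  simp [(ℛ R x).convMul_apply, mul_assoc]

theorem mulRight_comp_convMul_mulLeft_comp (f g : C →ₗ[R] A) (a b : A) :
    toConv (mulRight R a ∘ₗ f) * toConv (mulLeft R b ∘ₗ g) =
      toConv (mulRight R (a * b) ∘ₗ f) * toConv g := by
  ext x
  simp [(ℛ R x).convMul_apply, mul_assoc]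

end Convolution

section Slice

variable {R M N P : Type*} [CommSemiring R] [AddCommMonoid M] [Module R M]
  [AddCommMonoid N] [Module R N] [AddCommMonoid P] [Module R P]

theorem apply_lid_rTensor (φ : M →ₗ[R] R) (g : N →ₗ[R] P) (t : M ⊗[R] N) :
    g (TensorProduct.lid R N (rTensor N φ t)) =
      TensorProduct.lid R P (rTensor P φ (lTensor M g t)) := by
  induction t using TensorProduct.induction_on with
  | zero => simp
  | tmul m n => simp
  | add t t' ht ht' => simp [ht, ht']

theorem lid_rTensor_assoc_tmul (φ : M →ₗ[R] R) (t : M ⊗[R] N) (p : P) :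
    TensorProduct.lid R (N ⊗[R] P) (rTensor (N ⊗[R] P) φ (TensorProduct.assoc R M N P (t ⊗ₜ p))) =
      TensorProduct.lid R N (rTensor N φ t) ⊗ₜ p := by
  induction t using TensorProduct.induction_on with
  | zero => simp
  | tmul m n => simp [smul_tmul']
  | add t t' ht ht' => simp [add_tmul, ht, ht']

end Slice

section SliceAlgebra

variable {R M N : Type*} [CommSemiring R] [Semiring M] [Algebra R M] [Semiring N] [Algebra R N]

theorem lid_rTensor_mul_one_tmul (φ : M →ₗ[R] R) (X : M ⊗[R] N) (n : N) :
    TensorProduct.lid R N (rTensor N φ (X * (1 ⊗ₜ n))) =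
      TensorProduct.lid R N (rTensor N φ X) * n := by
  induction X using TensorProduct.induction_on with
  | zero => simp
  | tmul m n' => simp
  | add X Y hX hY => simp [add_mul, hX, hY]

theorem lid_rTensor_one_tmul_mul (φ : M →ₗ[R] R) (X : M ⊗[R] N) (n : N) :
    TensorProduct.lid R N (rTensor N φ ((1 ⊗ₜ n) * X)) =
      n * TensorProduct.lid R N (rTensor N φ X) := by
  induction X using TensorProduct.induction_on with
  | zero => simp
  | tmul m n' => simp
  | add X Y hX hY => simp [mul_add, hX, hY]

theorem rid_lTensor_mul_tmul_one_s14 (ψ : N →ₗ[R] R) (X : M ⊗[R] N) (m : M) :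
    TensorProduct.rid R M (lTensor M ψ (X * (m ⊗ₜ 1))) =
      TensorProduct.rid R M (lTensor M ψ X) * m := by
  induction X using TensorProduct.induction_on with
  | zero => simp
  | tmul m' n => simp
  | add X Y hX hY => simp [add_mul, hX, hY]

theorem rid_lTensor_tmul_one_mul_s14 (ψ : N →ₗ[R] R) (X : M ⊗[R] N) (m : M) :
    TensorProduct.rid R M (lTensor M ψ ((m ⊗ₜ 1) * X)) =
      m * TensorProduct.rid R M (lTensor M ψ X) := by
  induction X using TensorProduct.induction_on with
  | zero => simp
  | tmul m' n => simp
  | add X Y hX hY => simp [mul_add, hX, hY]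

end SliceAlgebra

section TargetMap

variable {k H}

theorem piL_eq_lid_rTensor (x : H) :
    PiL k H x = TensorProduct.lid k H (rTensor H (counit ∘ₗ mulRight k x) (comul (1 : H))) := by
  simp only [PiL, coe_comp, LinearEquiv.coe_coe, Function.comp_apply, mk_apply, flip_apply,
    mulLeft_apply]
  induction (comul (R := k) (1 : H)) using TensorProduct.induction_on with
  | zero => simp
  | tmul a b => simp
  | add t t' ht ht' => simp [add_mul, ht, ht']

theorem piR_eq_rid_lTensor (x : H) :
    PiR k H x = TensorProduct.rid k H (lTensor H (counit ∘ₗ mulLeft k x) (comul (1 : H))) := by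
  simp only [PiR, coe_comp, LinearEquiv.coe_coe, Function.comp_apply, mk_apply, mulRight_apply]
  induction (comul (R := k) (1 : H)) using TensorProduct.induction_on with
  | zero => simp
  | tmul a b => simp
  | add t t' ht ht' => simp [mul_add, ht, ht']

variable (k) in
def IsHL (y : H) : Prop :=
  comul (R := k) y = comul 1 * (y ⊗ₜ[k] (1 : H)) ∧ comul (R := k) y = (y ⊗ₜ[k] (1 : H)) * comul 1

theorem piR_mul_comm_of_isHL {y : H} (hy : IsHL k y) (g : H) :
    PiR k H g * y = y * PiR k H g := by
  rw [piR_eq_rid_lTensor, ← rid_lTensor_mul_tmul_one_s14, ← rid_lTensor_tmul_one_mul_s14, ← hy.1, hy.2]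

variable [WeakBialgebra k H]

theorem lTensor_comul_comul_one_left :
    lTensor H comul (comul (R := k) (1 : H)) =
      TensorProduct.assoc k H H H (comul 1 ⊗ₜ 1) * (1 ⊗ₜ comul 1) := by
  have h := congrArg (Algebra.TensorProduct.assoc k k k H H H)
    (WeakBialgebra.comul_one_left (H := H))
  rw [map_mul] at h
  rw [← coassoc_apply]
  exact h.trans (congrArg (_ * ·) ((Algebra.TensorProduct.assoc k k k H H H).apply_symm_apply _))

theorem lTensor_comul_comul_one_right :
    lTensor H comul (comul (R := k) (1 : H)) =
      (1 ⊗ₜ comul 1) * TensorProduct.assoc k H H H (comul 1 ⊗ₜ 1) := by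
  have h := congrArg (Algebra.TensorProduct.assoc k k k H H H)
    (WeakBialgebra.comul_one_right (H := H))
  rw [map_mul] at h
  rw [← coassoc_apply]
  exact h.trans (congrArg (· * _) ((Algebra.TensorProduct.assoc k k k H H H).apply_symm_apply _))

theorem isHL_piL (x : H) : IsHL k (PiL k H x) := by
  have comul_piL : comul (PiL k H x) = TensorProduct.lid k (H ⊗[k] H)
      (rTensor _ (counit ∘ₗ mulRight k x) (lTensor H comul (comul (R := k) (1 : H)))) := by
    rw [piL_eq_lid_rTensor, apply_lid_rTensor]
  constructor
  · rw [comul_piL, lTensor_comul_comul_one_right, lid_rTensor_one_tmul_mul,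
      lid_rTensor_assoc_tmul, ← piL_eq_lid_rTensor]
  · rw [comul_piL, lTensor_comul_comul_one_left, lid_rTensor_mul_one_tmul,
      lid_rTensor_assoc_tmul, ← piL_eq_lid_rTensor]

theorem comul_mul_of_isHL {y : H} (hy : IsHL k y) (h : H) :
    comul (R := k) (h * y) = comul h * (y ⊗ₜ[k] (1 : H)) := by
  rw [WeakBialgebra.comul_mul, hy.1, ← mul_assoc, ← WeakBialgebra.comul_mul, mul_one]

theorem IsHL.mul {y y' : H} (hy : IsHL k y) (hy' : IsHL k y') : IsHL k (y * y') := by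
  constructor
  · rw [comul_mul_of_isHL hy', hy.1, mul_assoc, Algebra.TensorProduct.tmul_mul_tmul, mul_one]
  · rw [WeakBialgebra.comul_mul, hy.2, mul_assoc, ← WeakBialgebra.comul_mul, one_mul, hy'.2,
      ← mul_assoc, Algebra.TensorProduct.tmul_mul_tmul, mul_one]

theorem counit_mul_piL (g h : H) : counit (R := k) (g * PiL k H h) = counit (R := k) (g * h) := by
  have counit_right_one := WeakBialgebra.counit_right (k := k) g 1 h
  rw [mul_one] at counit_right_one
  rw [counit_right_one, piL_eq_lid_rTensor, ← (ℛ k (1 : H)).eq]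
  simp [Finset.mul_sum, mul_comm]

theorem piL_mul_piL (h x : H) : PiL k H (h * PiL k H x) = PiL k H (h * x) := by
  simp only [piL_eq_lid_rTensor (h * _)]
  congr 3
  ext a
  simp [counit_mul_piL]

section Antipode

variable {S : H →ₗ[k] H} (hS : IsWeakAntipode k H S)
include hS

omit [WeakBialgebra k H] in
theorem antipode_convMul_id : toConv S * toConv LinearMap.id = toConv (PiR k H) :=
  WithConv.ext (LinearMap.ext hS.2.1)

omit [WeakBialgebra k H] in
theorem piR_convMul_antipode : toConv (PiR k H) * toConv S = toConv S := by
  rw [← antipode_convMul_id hS]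
  ext h
  have := hS.2.2 h
  rwa [TensorProduct.map_map, LinearMap.comp_id] at this

theorem mulRight_convMul_antipode {y : H} (hy : IsHL k y) :
    toConv (mulRight k y) * toConv S = toConv (PiL k H ∘ₗ mulRight k y) := by
  ext h
  rw [(ℛ k h).convMul_apply]
  change _ = PiL k H (h * y)
  rw [← hS.1, comul_mul_of_isHL hy, ← (ℛ k h).eq]
  simp [Finset.sum_mul]

omit [WeakBialgebra k H] in
theorem antipode_convMul_mulRight {y : H} (hy : IsHL k y) :
    toConv S * toConv (mulRight k y) = toConv (mulLeft k y ∘ₗ PiR k H) := by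
  have := convMul_mulRight_comp S LinearMap.id y
  rwa [LinearMap.comp_id, antipode_convMul_id hS, ofConv_toConv,
    show mulRight k y ∘ₗ PiR k H = mulLeft k y ∘ₗ PiR k H from
      LinearMap.ext (piR_mul_comm_of_isHL hy)] at this

theorem piL_comp_mulRight_convMul_piL_comp_mulRight {l l' : H} (hl : IsHL k l) (hl' : IsHL k l') :
    toConv (PiL k H ∘ₗ mulRight k l) * toConv (PiL k H ∘ₗ mulRight k l') =
      toConv (PiL k H ∘ₗ mulRight k (l * l')) := by
  calc toConv (PiL k H ∘ₗ mulRight k l) * toConv (PiL k H ∘ₗ mulRight k l')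
      = toConv (mulRight k l) * ((toConv S * toConv (mulRight k l')) * toConv S) := by
        rw [← mulRight_convMul_antipode hS hl, ← mulRight_convMul_antipode hS hl']
        simp only [mul_assoc]
    _ = toConv (mulRight k l) * toConv (mulLeft k l' ∘ₗ S) := by
        rw [antipode_convMul_mulRight hS hl', mulLeft_comp_convMul, piR_convMul_antipode hS,
          ofConv_toConv]
    _ = toConv (mulRight k (l * l')) * toConv S := by
        simpa using mulRight_comp_convMul_mulLeft_comp LinearMap.id S l l'
    _ = toConv (PiL k H ∘ₗ mulRight k (l * l')) := mulRight_convMul_antipode hS (hl.mul hl')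

end Antipode

end TargetMap

/-- `H^L` is a left `H`-module algebra via `h·l := Π^L(hl)`:
`1·l = l`, `h·(ll') = (h⁽¹⁾·l)(h⁽²⁾·l')` and `h·(g·l) = (hg)·l` for `l, l' ∈ H^L`. -/
theorem HL_moduleAlgebra [WeakBialgebra k H]
    (S : H →ₗ[k] H) (hS : IsWeakAntipode k H S) :
    (∀ l ∈ LinearMap.range (PiL k H), PiL k H ((1 : H) * l) = l) ∧
    (∀ (h : H), ∀ l ∈ LinearMap.range (PiL k H), ∀ l' ∈ LinearMap.range (PiL k H),
      PiL k H (h * (l * l')) =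
        LinearMap.mul' k H
          ((TensorProduct.map
            ((PiL k H) ∘ₗ LinearMap.mulRight k l)
            ((PiL k H) ∘ₗ LinearMap.mulRight k l'))
            (Coalgebra.comul (R := k) h))) ∧
    (∀ (h g : H), ∀ l ∈ LinearMap.range (PiL k H),
      PiL k H (h * PiL k H (g * l)) = PiL k H (h * g * l)) := by
  refine ⟨?_, ?_, ?_⟩
  · rintro _ ⟨x, rfl⟩
    simpa using piL_mul_piL (1 : H) x
  · rintro h _ ⟨x, rfl⟩ _ ⟨x', rfl⟩
    exact (congrArg (fun f ↦ f h)
      (piL_comp_mulRight_convMul_piL_comp_mulRight hS (isHL_piL x) (isHL_piL x'))).symm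
  · rintro h g l -
    rw [piL_mul_piL, mul_assoc]

end WeakHopfPaper
end
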